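/- The trace of Q^k is monotone under adding an edge: if H = G + e for an edge e not in G, then for every k ≥ 1, trace(Q(G)^k) ≤ trace(Q(H)^k), with strict inequality for k = 2. -/

import Mathlib

open scoped Classical

variable {V : Type*}

/-- The signless Laplacian matrix `Q = D + A` of a graph. -/
noncomputable def sLap (G : SimpleGraph V) [Fintype V] : Matrix V V ℝ :=
  Matrix.diagonal (fun v => (G.degree v : ℝ)) + G.adjMatrix ℝ

theorem sLap_isHermitian (G : SimpleGraph V) [Fintype V] : (sLap G).IsHermitian := by
  unfold sLap
  rw [Matrix.IsHermitian, Matrix.conjTranspose_eq_transpose_of_trivial, Matrix.transpose_add,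
    Matrix.diagonal_transpose, SimpleGraph.transpose_adjMatrix]

/-- The Laplacian matrix `L = D - A` of a graph. -/
noncomputable def lap (G : SimpleGraph V) [Fintype V] : Matrix V V ℝ :=
  Matrix.diagonal (fun v => (G.degree v : ℝ)) - G.adjMatrix ℝ

theorem lap_isHermitian (G : SimpleGraph V) [Fintype V] : (lap G).IsHermitian := by
  unfold lap
  rw [Matrix.IsHermitian, Matrix.conjTranspose_eq_transpose_of_trivial, Matrix.transpose_sub,
    Matrix.diagonal_transpose, SimpleGraph.transpose_adjMatrix]

/-- The signless Laplacian Estrada index: the sum of `exp qᵢ` over the eigenvalues of `Q`. -/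
noncomputable def SLEE (G : SimpleGraph V) [Fintype V] : ℝ :=
  ∑ i, Real.exp ((sLap_isHermitian G).eigenvalues i)

/-- The Laplacian Estrada index: the sum of `exp μᵢ` over the eigenvalues of `L`. -/
noncomputable def LEE (G : SimpleGraph V) [Fintype V] : ℝ :=
  ∑ i, Real.exp ((lap_isHermitian G).eigenvalues i)

/-- Semi-edge walks of length `k` from `x` to `y`: a sequence of `k+1` vertices and `k`
edges of `G` such that consecutive vertices are (not necessarily distinct) endpoints of
the intervening edge. -/
def semiEdgeWalks (G : SimpleGraph V) (k : ℕ) (x y : V) :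
    Set ((Fin (k + 1) → V) × (Fin k → Sym2 V)) :=
  {w | w.1 0 = x ∧ w.1 (Fin.last k) = y ∧
    ∀ i : Fin k, w.2 i ∈ G.edgeSet ∧ w.1 i.castSucc ∈ w.2 i ∧ w.1 i.succ ∈ w.2 i}

/-- Closed semi-edge walks of length `k` in `G`. -/
def closedSemiEdgeWalks (G : SimpleGraph V) (k : ℕ) :
    Set ((Fin (k + 1) → V) × (Fin k → Sym2 V)) :=
  {w | w.1 0 = w.1 (Fin.last k) ∧
    ∀ i : Fin k, w.2 i ∈ G.edgeSet ∧ w.1 i.castSucc ∈ w.2 i ∧ w.1 i.succ ∈ w.2 i}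

/-- The number of connected components of a graph. -/
noncomputable def numComponents (G : SimpleGraph V) : ℕ := Nat.card G.ConnectedComponent

/-- A cut vertex: a vertex whose removal increases the number of connected components. -/
def IsCutVertex (G : SimpleGraph V) (v : V) : Prop :=
  numComponents G < numComponents (G.induce ({v}ᶜ : Set V))

/-- The number of cut vertices of a graph. -/
noncomputable def cutVertexCount (G : SimpleGraph V) [Fintype V] : ℕ :=
  (Finset.univ.filter (fun v => IsCutVertex G v)).card

/-- The graph obtained from `G` by adding the edge `uv`. -/
def addEdge (G : SimpleGraph V) (u v : V) : SimpleGraph V :=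
  G ⊔ SimpleGraph.fromEdgeSet {s(u, v)}

/-- A block of `G`: a maximal vertex set inducing a connected subgraph with no cut vertex. -/
def IsBlock (G : SimpleGraph V) (B : Set V) : Prop :=
  (G.induce B).Connected ∧ (∀ v : B, ¬ IsCutVertex (G.induce B) v) ∧
  ∀ C : Set V, B ⊆ C → (G.induce C).Connected → (∀ v : C, ¬ IsCutVertex (G.induce C) v) →
    B = C

/-! Entrywise, `Q(G) ≤ Q(G + e)` and both are nonnegative, so every power of `Q(G)` is entrywise
below the same power of `Q(G + e)`, and so are the traces. For `k = 2`, `trace Q²` contains the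
term `Q_uu² = deg(u)²`, and adding `e = uv` raises `deg u` by one. -/

namespace Matrix

variable {n R : Type*} [Fintype n] [DecidableEq n]

section OrderedSemiring

variable [Semiring R] [PartialOrder R] [IsOrderedRing R] {A B : Matrix n n R}

theorem pow_apply_le_pow_apply (hA : ∀ i j, 0 ≤ A i j) (hAB : ∀ i j, A i j ≤ B i j) (k : ℕ)
    (i j : n) : (A ^ k) i j ≤ (B ^ k) i j := by
  induction k generalizing j with
  | zero => rfl
  | succ k ih =>
    rw [pow_succ, pow_succ, mul_apply, mul_apply]
    exact Finset.sum_le_sum fun l _ =>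
      mul_le_mul (ih l) (hAB l j) (hA l j) ((pow_apply_nonneg hA k i l).trans (ih l))

theorem trace_pow_le_trace_pow (hA : ∀ i j, 0 ≤ A i j) (hAB : ∀ i j, A i j ≤ B i j) (k : ℕ) :
    trace (A ^ k) ≤ trace (B ^ k) :=
  Finset.sum_le_sum fun i _ => pow_apply_le_pow_apply hA hAB k i i

end OrderedSemiring

theorem trace_sq_lt_trace_sq [Semiring R] [PartialOrder R] [IsStrictOrderedRing R]
    {A B : Matrix n n R} (hA : ∀ i j, 0 ≤ A i j) (hAB : ∀ i j, A i j ≤ B i j) {u : n}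
    (hu : A u u < B u u) : trace (A ^ 2) < trace (B ^ 2) := by
  have hmul : ∀ i j, A i j * A j i ≤ B i j * B j i := fun i j =>
    mul_le_mul (hAB i j) (hAB j i) (hA j i) ((hA i j).trans (hAB i j))
  simp only [trace, sq, diag_apply, mul_apply]
  refine Finset.sum_lt_sum (fun i _ => Finset.sum_le_sum fun j _ => hmul i j)
    ⟨u, Finset.mem_univ u, Finset.sum_lt_sum (fun j _ => hmul u j) ⟨u, Finset.mem_univ u, ?_⟩⟩
  exact mul_lt_mul'' hu hu (hA u u) (hA u u)

end Matrix

namespace SimpleGraph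

theorem le_addEdge (G : SimpleGraph V) (u v : V) : G ≤ addEdge G u v := le_sup_left

theorem addEdge_adj_self (G : SimpleGraph V) {u v : V} (huv : u ≠ v) :
    (addEdge G u v).Adj u v := by
  simp [addEdge, huv]

theorem degree_lt_degree_of_le_of_adj [Fintype V] {G H : SimpleGraph V} (hGH : G ≤ H)
    {u v : V} (hH : H.Adj u v) (hG : ¬G.Adj u v) : G.degree u < H.degree u := by
  refine Finset.card_lt_card ((Finset.ssubset_iff_of_subset ?_).mpr ⟨v, ?_, ?_⟩)
  · intro w hw
    simp only [mem_neighborFinset] at hw ⊢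
    exact hGH hw
  · simpa using hH
  · simpa using hG

end SimpleGraph

section sLap

variable [Fintype V]

theorem sLap_apply_nonneg (G : SimpleGraph V) (i j : V) : 0 ≤ sLap G i j := by
  by_cases h : i = j <;> simp [sLap, h, SimpleGraph.adjMatrix_apply, apply_ite]

theorem sLap_apply_self (G : SimpleGraph V) (i : V) : sLap G i i = G.degree i := by
  simp [sLap]

theorem sLap_apply_le_of_le {G H : SimpleGraph V} (hGH : G ≤ H) (i j : V) :
    sLap G i j ≤ sLap H i j := by
  have hadj : G.adjMatrix ℝ i j ≤ H.adjMatrix ℝ i j := by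
    by_cases h : G.Adj i j
    · simp [h, hGH h]
    · simp [h, apply_ite]
  by_cases h : i = j
  · subst h
    simp only [sLap_apply_self]
    exact_mod_cast SimpleGraph.degree_le_of_le hGH
  · simpa [sLap, h] using hadj

end sLap

/-- trace(Q^k) is monotone under adding an edge, strictly for k = 2. -/
theorem trace_sLap_pow_mono_addEdge (G : SimpleGraph V) [Fintype V] (u v : V)
    (hne : u ≠ v) (h : ¬ G.Adj u v) :
    (∀ k : ℕ, 1 ≤ k → Matrix.trace (sLap G ^ k) ≤ Matrix.trace (sLap (addEdge G u v) ^ k)) ∧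
    Matrix.trace (sLap G ^ 2) < Matrix.trace (sLap (addEdge G u v) ^ 2) := by
  have hle := sLap_apply_le_of_le (G.le_addEdge u v)
  have hdeg : sLap G u u < sLap (addEdge G u v) u u := by
    simp only [sLap_apply_self]
    exact_mod_cast SimpleGraph.degree_lt_degree_of_le_of_adj (G.le_addEdge u v)
      (G.addEdge_adj_self hne) h
  exact ⟨fun k _ => Matrix.trace_pow_le_trace_pow (sLap_apply_nonneg G) hle k,
    Matrix.trace_sq_lt_trace_sq (sLap_apply_nonneg G) hle hdeg⟩
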